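/- If N = (N_2,…,N_ℓ) is a nest, then over K = ℝ there exists a base chamber B of the cone c(Ish_N) such that Σ_{C ∈ Ch(c(Ish_N))} t^{d(B,C)} = (1+t)·∏_{i=2}^{ℓ}(1 + t + … + t^{|N_i|+ℓ−i}), where d(B,C) is the number of hyperplanes of the arrangement separating B from C. -/

import Mathlib

/-!
A chamber is a sign pattern of the forms (`signCell`). On the chart `|z| = 1` put
`y_i = (x_i - x_1) / |z|`: the hyperplanes of level `i` compare `y_i` with the values `y_j`
(`j > i`) and `-a · sign z` (`a ∈ N_i`). Because `N` is a nest, any two of these values are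
compared by a hyperplane of a higher level, so, descending through the levels, a chamber is
determined by the sign of `z` and, for each `i`, the number `p_i ≤ |N_i| + ℓ - i` of values below
`y_i`; choosing the `y_i` from the top down realises every such code. Seen from the chamber with
`z > 0` and all `p_i = 0`, the chamber with code `(sign z, p)` is separated by `z` when `z < 0`
and by exactly `p_i` hyperplanes of each level `i`, so `d = [z < 0] + ∑ p_i` and the sum factors.
-/

noncomputable section

variable {V : Type*} [TopologicalSpace V] [AddCommGroup V] [Module ℝ V]

/-- The complement of a central arrangement given by linear forms. -/
def arrCompl (A : Set (V →ₗ[ℝ] ℝ)) : Set V := {v | ∀ f ∈ A, f v ≠ 0}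

/-- The chambers: connected components of the complement. -/
def chambers (A : Set (V →ₗ[ℝ] ℝ)) : Set (Set V) :=
  {C | ∃ x ∈ arrCompl A, C = connectedComponentIn (arrCompl A) x}

/-- A hyperplane `f = 0` separates `B` from `C`. -/
def Separates (f : V →ₗ[ℝ] ℝ) (B C : Set V) : Prop :=
  ((∀ v ∈ B, f v < 0) ∧ (∀ v ∈ C, 0 < f v)) ∨
    ((∀ v ∈ B, 0 < f v) ∧ (∀ v ∈ C, f v < 0))

/-- The number of hyperplanes of `A` separating `B` from `C`. -/
def sepCount (A : Set (V →ₗ[ℝ] ℝ)) (B C : Set V) : ℕ :=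
  {f ∈ A | Separates f B C}.ncard

/-- coordinate projection -/
def pr {ι : Type*} (o : ι) : ((ι → ℝ) →ₗ[ℝ] ℝ) := LinearMap.proj o

/-- The linear forms of the cone over the `N`-Ish arrangement in `ℝ^{ℓ+1}`, `ℓ = n+1`:
`z`, `x_i - x_j` (2 ≤ i < j ≤ ℓ), `x_1 - x_j - a z` (2 ≤ j ≤ ℓ, a ∈ N_j).
Coordinates: `some 0` is `x₁`, `some i.succ` is `x_{i+2}`, `none` is `z`. -/
def coneIshLin (n : ℕ) (N : Fin n → Finset ℝ) :
    Set ((Option (Fin (n + 1)) → ℝ) →ₗ[ℝ] ℝ) :=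
  {pr none} ∪
    {f | ∃ i j : Fin n, i < j ∧ f = pr (some i.succ) - pr (some j.succ)} ∪
    {f | ∃ j : Fin n, ∃ a ∈ N j, f = pr (some 0) - pr (some j.succ) - a • pr none}


end

noncomputable section

open Finset Function

section CountingBelow

variable {α : Type*} [LinearOrder α]

lemma exists_lt_notMem_card_filter_lt_eq [DenselyOrdered α] [NoMinOrder α] (T : Finset α)
    {M : α} (hM : ∀ t ∈ T, t < M) {p : ℕ} (hp : p ≤ #T) :
    ∃ x < M, x ∉ T ∧ #{t ∈ T | t < x} = p := by
  induction T using Finset.induction_on_max generalizing M p with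
  | empty =>
    obtain ⟨x, hx⟩ := exists_lt M
    exact ⟨x, hx, notMem_empty x, by simp_all⟩
  | insert a s has ih =>
    have haM : a < M := hM a (mem_insert_self a s)
    rw [card_insert_of_notMem fun h => (has a h).false] at hp
    rcases hp.lt_or_eq with hp | rfl
    · obtain ⟨x, hxa, hxs, hcount⟩ := ih has (Nat.lt_succ_iff.mp hp)
      refine ⟨x, hxa.trans haM, by simp [hxs, hxa.ne], ?_⟩
      rwa [filter_insert, if_neg hxa.not_gt]
    · obtain ⟨x, hax, hxM⟩ := exists_between haM
      have hsx : ∀ t ∈ s, t < x := fun t ht => (has t ht).trans hax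
      refine ⟨x, hxM, by simpa [hax.ne'] using fun h => (hsx x h).false, ?_⟩
      rw [filter_true_of_mem, card_insert_of_notMem fun h => (has a h).false]
      simpa [hax] using hsx

lemma exists_notMem_card_filter_lt_eq [DenselyOrdered α] [NoMinOrder α] [NoMaxOrder α]
    [Nonempty α] (T : Finset α) {p : ℕ} (hp : p ≤ #T) : ∃ x ∉ T, #{t ∈ T | t < x} = p := by
  obtain ⟨M₀, hM₀⟩ := T.exists_le
  obtain ⟨M, hM⟩ := exists_gt M₀
  obtain ⟨x, -, hx⟩ :=
    exists_lt_notMem_card_filter_lt_eq T (fun t ht => (hM₀ t ht).trans_lt hM) hp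
  exact ⟨x, hx⟩

lemma lt_iff_card_filter_lt_lt {ι : Type*} [Fintype ι] (u : ι → α) (x : α) (k : ι) :
    u k < x ↔ #{l | u l < u k} < #{l | u l < x} := by
  constructor
  · intro h
    refine card_lt_card ((ssubset_iff_of_subset ?_).2 ⟨k, by simp [h], by simp⟩)
    exact monotone_filter_right _ fun l _ hl => hl.trans h
  · contrapose!
    exact fun h => card_le_card (monotone_filter_right _ fun l _ hl => hl.trans_le h)

lemma lt_iff_lt_of_card_filter_lt_eq {ι : Type*} [Fintype ι] {u u' : ι → α} {x x' : α}
    (ho : ∀ k l, u k < u l ↔ u' k < u' l) (hc : #{k | u k < x} = #{k | u' k < x'}) (k : ι) :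
    u k < x ↔ u' k < x' := by
  rw [lt_iff_card_filter_lt_lt u x, lt_iff_card_filter_lt_lt u' x', hc,
    filter_congr fun l _ => ho l k]

end CountingBelow

lemma sum_pow_sum_fin_eq_prod {R ι : Type*} [CommSemiring R] [Fintype ι] [DecidableEq ι]
    (m : ι → ℕ) (t : R) :
    ∑ p : (i : ι) → Fin (m i + 1), t ^ ∑ i, (p i : ℕ) = ∏ i, ∑ k ∈ range (m i + 1), t ^ k := by
  calc ∑ p : (i : ι) → Fin (m i + 1), t ^ ∑ i, (p i : ℕ)
      = ∑ p ∈ Fintype.piFinset fun i => (univ : Finset (Fin (m i + 1))),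
          ∏ i, t ^ (p i : ℕ) := by
        simp [prod_pow_eq_pow_sum]
    _ = ∏ i, ∑ j : Fin (m i + 1), t ^ (j : ℕ) :=
        (prod_univ_sum (fun i => univ) fun i (j : Fin (m i + 1)) => t ^ (j : ℕ)).symm
    _ = ∏ i, ∑ k ∈ range (m i + 1), t ^ k :=
        prod_congr rfl fun i _ => Fin.sum_univ_eq_sum_range (t ^ ·) _

lemma pos_iff_pos_iff_neg_iff_neg {α : Type*} [LinearOrder α] [Zero α] {a b : α} (ha : a ≠ 0)
    (hb : b ≠ 0) : (0 < a ↔ 0 < b) ↔ (a < 0 ↔ b < 0) := by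
  rcases ha.lt_or_gt with h | h <;> rcases hb.lt_or_gt with h' | h' <;>
    simp [h, h', lt_asymm h, lt_asymm h']

lemma ne_zero_and_pos_iff_pos_iff_mul_pos {α : Type*} [Ring α] [LinearOrder α]
    [IsStrictOrderedRing α] {a b : α} (hb : b ≠ 0) : (a ≠ 0 ∧ (0 < a ↔ 0 < b)) ↔ 0 < b * a := by
  rcases hb.lt_or_gt with h | h <;> rcases lt_trichotomy a 0 with h' | rfl | h' <;>
    simp [*, lt_asymm, mul_pos_iff, ne_of_lt, ne_of_gt]

section SignCell

variable {V : Type*} [AddCommGroup V] [Module ℝ V]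

def signCell (A : Set (V →ₗ[ℝ] ℝ)) (w : V) : Set V :=
  {v ∈ arrCompl A | ∀ f ∈ A, 0 < f v ↔ 0 < f w}

variable {A : Set (V →ₗ[ℝ] ℝ)} {v w : V}

lemma mem_signCell_self (hw : w ∈ arrCompl A) : w ∈ signCell A w := ⟨hw, fun _ _ => Iff.rfl⟩

lemma neg_iff_neg_of_mem_signCell (hw : w ∈ arrCompl A) (hv : v ∈ signCell A w)
    {f : V →ₗ[ℝ] ℝ} (hf : f ∈ A) : f v < 0 ↔ f w < 0 :=
  (pos_iff_pos_iff_neg_iff_neg (hv.1 f hf) (hw f hf)).1 (hv.2 f hf)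

lemma signCell_eq_signCell_iff {w' : V} (hw : w ∈ arrCompl A) :
    signCell A w = signCell A w' ↔ ∀ f ∈ A, 0 < f w ↔ 0 < f w' := by
  refine ⟨fun h => (h ▸ mem_signCell_self hw).2, fun h => ?_⟩
  ext v
  exact and_congr_right fun _ => forall₂_congr fun f hf => iff_congr Iff.rfl (h f hf)

lemma signCell_eq_iInter (hw : w ∈ arrCompl A) :
    signCell A w = ⋂ f ∈ A, {v | 0 < (f w • f) v} := by
  ext v
  simp only [signCell, arrCompl, Set.mem_ofPred_eq, Set.mem_iInter, LinearMap.smul_apply,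
    smul_eq_mul, ← forall₂_and]
  exact forall₂_congr fun f hf => ne_zero_and_pos_iff_pos_iff_mul_pos (hw f hf)

lemma convex_signCell (hw : w ∈ arrCompl A) : Convex ℝ (signCell A w) := by
  rw [signCell_eq_iInter hw]
  exact convex_iInter₂ fun f _ => convex_halfSpace_gt (f w • f).isLinear 0

lemma connectedComponentIn_arrCompl_eq_signCell [TopologicalSpace V] [ContinuousAdd V]
    [ContinuousSMul ℝ V] (hA : ∀ f ∈ A, Continuous f) (hw : w ∈ arrCompl A) :
    connectedComponentIn (arrCompl A) w = signCell A w := by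
  set C := connectedComponentIn (arrCompl A) w
  have hCA : C ⊆ arrCompl A := connectedComponentIn_subset _ _
  -- `f '' C` is an interval avoiding `0`.
  have pos_of_pos : ∀ f ∈ A, ∀ a ∈ C, ∀ b ∈ C, 0 < f a → 0 < f b := by
    intro f hf a ha b hb hfa
    by_contra hfb
    have hfb : f b < 0 := (hCA hb f hf).lt_of_le (not_lt.1 hfb)
    obtain ⟨c, hc, hfc⟩ := (isPreconnected_connectedComponentIn.image f
      (hA f hf).continuousOn).Icc_subset (Set.mem_image_of_mem f hb) (Set.mem_image_of_mem f ha)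
      ⟨hfb.le, hfa.le⟩
    exact hCA hc f hf hfc
  refine Set.Subset.antisymm (fun v hv => ⟨hCA hv, fun f hf => ?_⟩) ?_
  · have hwC : w ∈ C := mem_connectedComponentIn hw
    exact ⟨pos_of_pos f hf v hv w hwC, pos_of_pos f hf w hwC v hv⟩
  · exact (convex_signCell hw).isPreconnected.subset_connectedComponentIn
      (mem_signCell_self hw) fun v hv => hv.1

lemma chambers_eq_image_signCell [TopologicalSpace V] [ContinuousAdd V] [ContinuousSMul ℝ V]
    (hA : ∀ f ∈ A, Continuous f) : chambers A = signCell A '' arrCompl A := by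
  ext C
  refine exists_congr fun x => and_congr_right fun hx => ?_
  rw [connectedComponentIn_arrCompl_eq_signCell hA hx, eq_comm]

lemma separates_signCell_iff {b c : V} (hb : b ∈ arrCompl A) (hc : c ∈ arrCompl A)
    {f : V →ₗ[ℝ] ℝ} (hf : f ∈ A) :
    Separates f (signCell A b) (signCell A c) ↔ ¬(0 < f b ↔ 0 < f c) := by
  have hb' := mem_signCell_self hb
  have hc' := mem_signCell_self hc
  constructor
  · rintro (⟨h1, h2⟩ | ⟨h1, h2⟩) h
    · exact lt_asymm (h1 b hb') (h.2 (h2 c hc'))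
    · exact lt_asymm (h2 c hc') (h.1 (h1 b hb'))
  · intro h
    rcases (hb f hf).lt_or_gt with hfb | hfb <;> rcases (hc f hf).lt_or_gt with hfc | hfc
    · exact absurd (iff_of_false (lt_asymm hfb) (lt_asymm hfc)) h
    · exact .inl ⟨fun v hv => (neg_iff_neg_of_mem_signCell hb hv hf).2 hfb,
        fun v hv => (hv.2 f hf).2 hfc⟩
    · exact .inr ⟨fun v hv => (hv.2 f hf).2 hfb,
        fun v hv => (neg_iff_neg_of_mem_signCell hc hv hf).2 hfc⟩
    · exact absurd (iff_of_true hfb hfc) h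

lemma sepCount_range_signCell {J : Type*} [Fintype J] {Φ : J → V →ₗ[ℝ] ℝ} (hΦ : Injective Φ)
    {b c : V} (hb : b ∈ arrCompl (Set.range Φ)) (hc : c ∈ arrCompl (Set.range Φ)) :
    sepCount (Set.range Φ) (signCell (Set.range Φ) b) (signCell (Set.range Φ) c) =
      #{e | ¬(0 < Φ e b ↔ 0 < Φ e c)} := by
  classical
  have : {f ∈ Set.range Φ | Separates f (signCell (Set.range Φ) b) (signCell (Set.range Φ) c)} =
      Φ '' ↑({e | ¬(0 < Φ e b ↔ 0 < Φ e c)} : Finset J) := by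
    ext f
    simp only [Set.mem_ofPred_eq, coe_filter, mem_univ, true_and, Set.mem_image]
    constructor
    · rintro ⟨⟨e, rfl⟩, hs⟩
      exact ⟨e, (separates_signCell_iff hb hc ⟨e, rfl⟩).1 hs, rfl⟩
    · rintro ⟨e, hs, rfl⟩
      exact ⟨⟨e, rfl⟩, (separates_signCell_iff hb hc ⟨e, rfl⟩).2 hs⟩
  rw [sepCount, this, Set.ncard_image_of_injective _ hΦ, Set.ncard_coe_finset]

end SignCell

namespace Ish

variable {n : ℕ} {N : Fin n → Finset ℝ}

abbrev E (n : ℕ) : Type := Option (Fin (n + 1)) → ℝ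

/-- The hyperplanes of level `i`: `x_{i+2} - x_{j+2}` for `i < j`, and
`x_1 - x_{i+2} - a z` for `a ∈ N i`. -/
abbrev Level (N : Fin n → Finset ℝ) (i : Fin n) : Type := {j // i < j} ⊕ N i

abbrev Idx (N : Fin n → Finset ℝ) : Type := Unit ⊕ Σ i, Level N i

def form (N : Fin n → Finset ℝ) : Idx N → (E n →ₗ[ℝ] ℝ)
  | .inl _ => pr none
  | .inr ⟨i, .inl j⟩ => pr (some i.succ) - pr (some j.1.succ)
  | .inr ⟨i, .inr a⟩ => pr (some 0) - pr (some i.succ) - a.1 • pr none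

lemma range_form : Set.range (form N) = coneIshLin n N := by
  ext f
  constructor
  · rintro ⟨_ | ⟨i, j | a⟩, rfl⟩
    · exact .inl (.inl rfl)
    · exact .inl (.inr ⟨i, j.1, j.2, rfl⟩)
    · exact .inr ⟨i, a.1, a.2, rfl⟩
  · rintro ((rfl | ⟨i, j, hij, rfl⟩) | ⟨i, a, ha, rfl⟩)
    · exact ⟨.inl (), rfl⟩
    · exact ⟨.inr ⟨i, .inl ⟨j, hij⟩⟩, rfl⟩
    · exact ⟨.inr ⟨i, .inr ⟨a, ha⟩⟩, rfl⟩

lemma form_injective : Injective (form N) := by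
  intro e e' h
  have ev (o : Option (Fin (n + 1))) : form N e (Pi.single o 1) = form N e' (Pi.single o 1) := by
    rw [h]
  -- The coefficients of `x_1` and `z` tell the three kinds of forms apart.
  rcases e with _ | ⟨i, j | a⟩ <;> rcases e' with _ | ⟨i', j' | a'⟩
  all_goals
    have h0 := ev (some 0)
    have hz := ev none
    simp [form, pr, Fin.succ_ne_zero] at h0 hz ⊢
  · obtain rfl : i' = i := by
      have hi : (1 : ℝ) = (if i' = i then 1 else 0) - if (j' : Fin n) = i then 1 else 0 := by
        simpa [form, pr, Pi.single_apply, j.2.ne] using ev (some i.succ)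
      by_contra hne
      simp only [hne, if_false] at hi
      split_ifs at hi <;> norm_num at hi
    obtain rfl : j' = j := by
      have hj : (-1 : ℝ) = 0 - if (j' : Fin n) = j then 1 else 0 := by
        simpa [form, pr, Pi.single_apply, j.2.ne, j.2.ne'] using ev (some j.1.succ)
      by_contra hne
      simp [Subtype.coe_ne_coe.2 hne] at hj
    exact ⟨rfl, .rfl⟩
  · obtain rfl : i' = i := by simpa [form, pr, Pi.single_apply] using ev (some i.succ)
    simp [Subtype.ext_iff, hz]

def boolSign (b : Bool) : ℝ := if b then 1 else -1

lemma boolSign_ne_zero (b : Bool) : boolSign b ≠ 0 := by cases b <;> simp [boolSign]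

lemma abs_boolSign (b : Bool) : |boolSign b| = 1 := by cases b <;> simp [boolSign]

lemma decide_pos_boolSign (b : Bool) : decide (0 < boolSign b) = b := by
  cases b <;> simp [boolSign]

lemma abs_mul_boolSign_decide_pos (z : ℝ) : |z| * boolSign (decide (0 < z)) = z := by
  by_cases hz : 0 < z
  · simp [boolSign, hz, abs_of_pos hz]
  · simp [boolSign, hz, abs_of_nonpos (not_lt.1 hz)]

section Coordinates

variable {w w' : E n}

/-- Coordinates on the affine chart `|z| = 1`: there the hyperplanes of level `i` compare
`y w i` with the values `levelVal w i`. -/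
def y (w : E n) (i : Fin n) : ℝ := (w (some i.succ) - w (some 0)) / |w none|

def levelVal (w : E n) (i : Fin n) : Level N i → ℝ :=
  Sum.elim (fun j => y w j) (fun a => -a * boolSign (decide (0 < w none)))

abbrev Below (w : E n) (i : Fin n) (k : Level N i) : Prop := levelVal w i k < y w i

def belowCount (N : Fin n → Finset ℝ) (w : E n) (i : Fin n) : ℕ :=
  #{k : Level N i | Below w i k}

lemma form_inl_eq (hz : w none ≠ 0) (i : Fin n) (j : {j // i < j}) :
    form N (.inr ⟨i, .inl j⟩) w = |w none| * (y w i - levelVal (N := N) w i (.inl j)) := by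
  simp only [form, pr, levelVal, y, Sum.elim_inl, LinearMap.sub_apply, LinearMap.proj_apply]
  field_simp
  ring

lemma form_inr_eq (hz : w none ≠ 0) (i : Fin n) (a : N i) :
    form N (.inr ⟨i, .inr a⟩) w = |w none| * (levelVal w i (.inr a) - y w i) := by
  simp only [form, pr, levelVal, y, Sum.elim_inr, LinearMap.sub_apply, LinearMap.proj_apply,
    LinearMap.smul_apply, smul_eq_mul]
  field_simp
  rw [mul_assoc, abs_mul_boolSign_decide_pos]
  ring

lemma form_inr_ne_zero_iff (hz : w none ≠ 0) (i : Fin n) (k : Level N i) :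
    form N (.inr ⟨i, k⟩) w ≠ 0 ↔ levelVal w i k ≠ y w i := by
  rcases k with j | a
  · rw [form_inl_eq hz, mul_ne_zero_iff, sub_ne_zero, and_iff_right (abs_ne_zero.2 hz), ne_comm]
  · rw [form_inr_eq hz, mul_ne_zero_iff, sub_ne_zero, and_iff_right (abs_ne_zero.2 hz)]

lemma mem_arrCompl_iff :
    w ∈ arrCompl (Set.range (form N)) ↔
      w none ≠ 0 ∧ ∀ i (k : Level N i), levelVal w i k ≠ y w i := by
  simp only [arrCompl, Set.mem_ofPred_eq, Set.forall_mem_range]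
  refine ⟨fun h => ⟨h (.inl ()), fun i k => ?_⟩, fun ⟨hz, h⟩ => ?_⟩
  · exact (form_inr_ne_zero_iff (h (.inl ())) i k).1 (h (.inr ⟨i, k⟩))
  · rintro (_ | ⟨i, k⟩)
    exacts [hz, (form_inr_ne_zero_iff hz i k).2 (h i k)]

lemma pos_form_inl_iff (hz : w none ≠ 0) (i : Fin n) (j : {j // i < j}) :
    0 < form N (.inr ⟨i, .inl j⟩) w ↔ Below (N := N) w i (.inl j) := by
  rw [form_inl_eq hz, mul_pos_iff_of_pos_left (abs_pos.2 hz), sub_pos]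

lemma form_inr_neg_iff (hz : w none ≠ 0) (i : Fin n) (a : N i) :
    form N (.inr ⟨i, .inr a⟩) w < 0 ↔ Below w i (.inr a) := by
  rw [form_inr_eq hz, ← smul_eq_mul, smul_neg_iff_of_pos_left (abs_pos.2 hz), sub_neg]

lemma pos_form_inr_iff_iff (hw : w ∈ arrCompl (Set.range (form N)))
    (hw' : w' ∈ arrCompl (Set.range (form N))) (i : Fin n) (k : Level N i) :
    (0 < form N (.inr ⟨i, k⟩) w ↔ 0 < form N (.inr ⟨i, k⟩) w') ↔
      (Below w i k ↔ Below w' i k) := by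
  have hz := (mem_arrCompl_iff.1 hw).1
  have hz' := (mem_arrCompl_iff.1 hw').1
  rcases k with j | a
  · rw [pos_form_inl_iff hz, pos_form_inl_iff hz']
  · rw [pos_iff_pos_iff_neg_iff_neg (hw _ ⟨_, rfl⟩) (hw' _ ⟨_, rfl⟩), form_inr_neg_iff hz,
      form_inr_neg_iff hz']

lemma levelVal_injective (hN : Monotone N) (hw : w ∈ arrCompl (Set.range (form N)))
    (i : Fin n) : Injective (levelVal (N := N) w i) := by
  have hne := (mem_arrCompl_iff.1 hw).2
  rintro (j | a) (j' | b) h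
  · rcases lt_trichotomy j.1 j'.1 with hlt | heq | hgt
    · exact absurd h.symm (hne j (.inl ⟨j', hlt⟩))
    · exact congrArg Sum.inl (Subtype.ext heq)
    · exact absurd h (hne j' (.inl ⟨j, hgt⟩))
  · exact absurd h.symm (hne j (.inr ⟨b, hN j.2.le b.2⟩))
  · exact absurd h (hne j' (.inr ⟨a, hN j'.2.le a.2⟩))
  · simp only [levelVal, Sum.elim_inr, mul_left_inj' (boolSign_ne_zero _), neg_inj] at h
    exact congrArg Sum.inr (Subtype.ext h)

end Coordinates

section Code

variable {w w' : E n}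

abbrev Code (N : Fin n → Finset ℝ) : Type :=
  Bool × ((i : Fin n) → Fin (Fintype.card (Level N i) + 1))

def code (N : Fin n → Finset ℝ) (w : E n) : Code N :=
  (decide (0 < w none), fun i => ⟨belowCount N w i, Nat.lt_succ_of_le (card_le_univ _)⟩)

lemma lt_levelVal_iff_of_below_iff (hw : w ∈ arrCompl (Set.range (form N)))
    (hw' : w' ∈ arrCompl (Set.range (form N))) {i : Fin n} {k : Level N i}
    (h : Below w i k ↔ Below w' i k) : y w i < levelVal w i k ↔ y w' i < levelVal w' i k := by
  rw [← ((mem_arrCompl_iff.1 hw).2 i k).symm.le_iff_lt,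
    ← ((mem_arrCompl_iff.1 hw').2 i k).symm.le_iff_lt, ← not_lt, ← not_lt, not_iff_not]
  exact h

/-- For a nest, two values of level `i` are compared by a hyperplane of a higher level, unless
both are constants. -/
lemma levelVal_lt_levelVal_iff (hN : Monotone N) (hw : w ∈ arrCompl (Set.range (form N)))
    (hw' : w' ∈ arrCompl (Set.range (form N))) (hs : decide (0 < w none) = decide (0 < w' none))
    {i : Fin n} (ih : ∀ j > i, ∀ k : Level N j, Below w j k ↔ Below w' j k) (k l : Level N i) :
    levelVal w i k < levelVal w i l ↔ levelVal w' i k < levelVal w' i l := by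
  rcases k with j | a <;> rcases l with j' | b
  · rcases lt_trichotomy j.1 j'.1 with h | h | h
    · exact lt_levelVal_iff_of_below_iff hw hw' (ih j j.2 (.inl ⟨j', h⟩))
    · obtain rfl : j = j' := Subtype.ext h
      exact iff_of_false (lt_irrefl _) (lt_irrefl _)
    · exact ih j' j'.2 (.inl ⟨j, h⟩)
  · exact lt_levelVal_iff_of_below_iff hw hw' (ih j j.2 (.inr ⟨b, hN j.2.le b.2⟩))
  · exact ih j' j'.2 (.inr ⟨a, hN j'.2.le a.2⟩)
  · simp only [levelVal, Sum.elim_inr, hs]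

/-- Going down the levels, the relative order of the values of level `i` is fixed by the higher
levels, and then the position of `y w i` among them by `belowCount N w i`. -/
lemma below_iff_below_of_code_eq (hN : Monotone N) (hw : w ∈ arrCompl (Set.range (form N)))
    (hw' : w' ∈ arrCompl (Set.range (form N))) (h : code N w = code N w') (i : Fin n)
    (k : Level N i) : Below w i k ↔ Below w' i k := by
  have hc (i : Fin n) : belowCount N w i = belowCount N w' i :=
    congrArg Fin.val (congrFun (congrArg Prod.snd h) i)
  induction i using WellFoundedGT.induction with
  | ind i ih =>
    exact lt_iff_lt_of_card_filter_lt_eq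
      (levelVal_lt_levelVal_iff hN hw hw' (congrArg Prod.fst h) fun j hj => ih j hj) (hc i) k

lemma signCell_eq_signCell_iff_code_eq (hN : Monotone N)
    (hw : w ∈ arrCompl (Set.range (form N))) (hw' : w' ∈ arrCompl (Set.range (form N))) :
    signCell (Set.range (form N)) w = signCell (Set.range (form N)) w' ↔
      code N w = code N w' := by
  rw [signCell_eq_signCell_iff hw, Set.forall_mem_range]
  constructor
  · intro h
    refine Prod.ext (decide_eq_decide.2 (h (.inl ()))) (funext fun i => Fin.ext ?_)
    exact congrArg card (filter_congr fun k _ => (pos_form_inr_iff_iff hw hw' i k).1 (h _))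
  · rintro h (_ | ⟨i, k⟩)
    · exact decide_eq_decide.1 (congrArg Prod.fst h)
    · exact (pos_form_inr_iff_iff hw hw' i k).2 (below_iff_below_of_code_eq hN hw hw' h i k)

end Code

section Construction

/-- The `y`-coordinates, chosen from the top level down: `y i` avoids the values of level `i`
and has `min (p i) _` of them below it (the `min` only makes the definition total). -/
def liftY (N : Fin n → Finset ℝ) (ε : ℝ) (p : Fin n → ℕ) (i : Fin n) : ℝ :=
  let S : Finset ℝ :=
    univ.image (Sum.elim (fun j : {j // i < j} => liftY N ε p j.1) fun a : N i => -a * ε)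
  Classical.choose (exists_notMem_card_filter_lt_eq S (min_le_right (p i) #S))
termination_by n - i
decreasing_by have := j.2; have := j.1.isLt; omega

def levelSet (N : Fin n → Finset ℝ) (ε : ℝ) (p : Fin n → ℕ) (i : Fin n) : Finset ℝ :=
  univ.image (Sum.elim (fun j : {j // i < j} => liftY N ε p j.1) fun a : N i => -a * ε)

lemma liftY_spec (ε : ℝ) (p : Fin n → ℕ) (i : Fin n) :
    liftY N ε p i ∉ levelSet N ε p i ∧
      #{t ∈ levelSet N ε p i | t < liftY N ε p i} = min (p i) #(levelSet N ε p i) := by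
  rw [liftY]
  exact Classical.choose_spec
    (exists_notMem_card_filter_lt_eq (levelSet N ε p i) (min_le_right _ _))

def point (q : Code N) : E n :=
  fun o => o.elim (boolSign q.1) (Fin.cons 0 (liftY N (boolSign q.1) fun i => q.2 i))

lemma y_point (q : Code N) (i : Fin n) :
    y (point q) i = liftY N (boolSign q.1) (fun i => q.2 i) i := by
  simp [y, point, abs_boolSign]

lemma levelVal_point (q : Code N) (i : Fin n) :
    levelVal (point q) i =
      Sum.elim (fun j : {j // i < j} => liftY N (boolSign q.1) (fun i => q.2 i) j.1)
        fun a : N i => -a * boolSign q.1 := by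
  ext (j | a)
  · exact y_point q j
  · simp only [levelVal, Sum.elim_inr]
    rw [show point q none = boolSign q.1 from rfl, decide_pos_boolSign]

lemma point_mem (q : Code N) : point q ∈ arrCompl (Set.range (form N)) := by
  refine mem_arrCompl_iff.2 ⟨boolSign_ne_zero q.1, fun i k h =>
    (liftY_spec (N := N) (boolSign q.1) (fun i => q.2 i) i).1 ?_⟩
  rw [← y_point, ← h, levelVal_point]
  exact mem_image_of_mem _ (mem_univ k)

lemma belowCount_point (hN : Monotone N) (q : Code N) (i : Fin n) :
    belowCount N (point q) i = q.2 i := by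
  set S := levelSet N (boolSign q.1) (fun i => q.2 i) i
  have hinj := levelVal_injective hN (point_mem q) i
  have hS : S = univ.image (levelVal (N := N) (point q) i) := by
    rw [levelVal_point]
    rfl
  have hcard : #S = Fintype.card (Level N i) := by
    rw [hS, card_image_of_injective _ hinj, card_univ]
  calc belowCount N (point q) i = #{t ∈ S | t < y (point q) i} := by
        rw [hS, filter_image, card_image_of_injective _ hinj]
        rfl
    _ = q.2 i := by
        rw [y_point, (liftY_spec (N := N) (boolSign q.1) (fun i => q.2 i) i).2, hcard]
        exact min_eq_left (Nat.lt_succ_iff.1 (q.2 i).2)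

lemma code_point (hN : Monotone N) (q : Code N) : code N (point q) = q :=
  Prod.ext (decide_pos_boolSign q.1) (funext fun i => Fin.ext (belowCount_point hN q i))

end Construction

section Chambers

def chamber (q : Code N) : Set (E n) := signCell (Set.range (form N)) (point q)

lemma chambers_eq_range_chamber (hN : Monotone N) :
    chambers (Set.range (form N)) = Set.range (chamber (N := N)) := by
  rw [chambers_eq_image_signCell fun f _ => f.continuous_of_finiteDimensional]
  ext C
  constructor
  · rintro ⟨w, hw, rfl⟩
    refine ⟨code N w, ?_⟩
    rw [chamber, signCell_eq_signCell_iff_code_eq hN (point_mem _) hw, code_point hN]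
  · rintro ⟨q, rfl⟩
    exact ⟨point q, point_mem q, rfl⟩

lemma chamber_injective (hN : Monotone N) : Injective (chamber (N := N)) := fun q q' h => by
  rwa [chamber, chamber, signCell_eq_signCell_iff_code_eq hN (point_mem q) (point_mem q'),
    code_point hN, code_point hN] at h

def base (N : Fin n → Finset ℝ) : Code N := (true, 0)

lemma not_below_point_base (hN : Monotone N) (i : Fin n) (k : Level N i) :
    ¬Below (point (base N)) i k := by
  have h : belowCount N (point (base N)) i = 0 :=
    (belowCount_point hN (base N) i).trans (Fin.val_zero _)
  rw [belowCount, card_eq_zero, filter_eq_empty_iff] at h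
  exact h (mem_univ k)

lemma sepCount_chamber_base (hN : Monotone N) (q : Code N) :
    sepCount (Set.range (form N)) (chamber (base N)) (chamber q) =
      (if q.1 then 0 else 1) + ∑ i, (q.2 i : ℕ) := by
  rw [chamber, chamber, sepCount_range_signCell form_injective (point_mem _) (point_mem _),
    card_filter, Fintype.sum_sum_type, Fintype.sum_sigma]
  congr 1
  · cases h : q.1 <;> simp [base, point, boolSign, form, pr, h]
  · refine sum_congr rfl fun i _ => ?_
    simp_rw [pos_form_inr_iff_iff (point_mem _) (point_mem _), not_below_point_base hN,
      false_iff, not_not, ← card_filter]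
    exact belowCount_point hN q i

lemma card_level (i : Fin n) : Fintype.card (Level N i) = #(N i) + (n - 1 - i) := by
  rw [Fintype.card_sum, Fintype.card_coe, Fintype.card_subtype, filter_lt_eq_Ioi, Fin.card_Ioi,
    add_comm]

end Chambers

end Ish

/-- With `ℓ = n + 1`, the factor of `j : Fin n` is the paper's factor of `i = j + 2`:
`|N_i| + ℓ - i = |N j| + (n - 1 - j)`. -/
theorem ish_wall_crossing (n : ℕ) (N : Fin n → Finset ℝ)
    (hN : ∀ i j : Fin n, i ≤ j → N i ⊆ N j) :
    ∃ B ∈ chambers (coneIshLin n N), ∀ t : ℝ,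
      (∑ᶠ C ∈ chambers (coneIshLin n N), t ^ sepCount (coneIshLin n N) B C) =
        (1 + t) * ∏ j : Fin n,
          ∑ m ∈ Finset.range ((N j).card + (n - 1 - (j : ℕ)) + 1), t ^ m := by
  have hmono : Monotone N := fun i j hij => hN i j hij
  rw [← Ish.range_form, Ish.chambers_eq_range_chamber hmono]
  refine ⟨Ish.chamber (Ish.base N), ⟨_, rfl⟩, fun t => ?_⟩
  rw [finsum_mem_range (Ish.chamber_injective hmono), finsum_eq_sum_of_fintype,
    Fintype.sum_prod_type, Fintype.sum_bool]
  simp_rw [Ish.sepCount_chamber_base hmono, ← Ish.card_level, ← sum_pow_sum_fin_eq_prod]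
  simp only [if_true, Bool.false_eq_true, if_false, zero_add, pow_add, pow_one, ← mul_sum]
  ring
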